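/- Let M be a matroid with tree-decomposition (T, {X_v}) and let ℓ be a leaf of T adjacent to u. Let X'_ℓ = X_ℓ − cl_M(X_u) and X'_u = X_u ∪ (X_ℓ ∩ cl_M(X_u)). Then λ_M(X'_ℓ) ≤ λ_M(X_ℓ). -/

import Mathlib

open Set

namespace MatroidSecretary

variable {α : Type*}

/-- The rank of a set in a matroid: the maximum size of an independent subset. -/
noncomputable def rk (M : Matroid α) (X : Set α) : ℕ :=
  sSup {n | ∃ I, M.Indep I ∧ I ⊆ X ∧ I.ncard = n}

/-- The local connectivity `⊓_M(X,Y) = r(X) + r(Y) - r(X ∪ Y)` (as an integer). -/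
noncomputable def econn (M : Matroid α) (X Y : Set α) : ℤ :=
  (rk M X : ℤ) + rk M Y - rk M (X ∪ Y)

/-- The connectivity function `λ_M(X) = r(X) + r(E \ X) - r(E)` (as an integer). -/
noncomputable def lambda (M : Matroid α) (X : Set α) : ℤ :=
  (rk M X : ℤ) + rk M (M.E \ X) - rk M M.E

/-- Contraction `M / C`, defined by duality: `M / C = (M✶ \ C)✶`. -/
noncomputable def contract (M : Matroid α) (C : Set α) : Matroid α :=
  Matroid.dual (Matroid.restrict (Matroid.dual M) (M.E \ C))

/-- Deletion `M \ D`, i.e. restriction to the complement. -/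
noncomputable def delete (M : Matroid α) (D : Set α) : Matroid α :=
  Matroid.restrict M (M.E \ D)

/-- A circuit: a dependent set all of whose proper subsets are independent. -/
def Circuit (M : Matroid α) (C : Set α) : Prop :=
  M.Dep C ∧ ∀ x ∈ C, M.Indep (C \ {x})

/-- A loop of a matroid. -/
def IsLoop (M : Matroid α) (e : α) : Prop := e ∈ M.E ∧ ¬ M.Indep {e}

/-- The total weight of a set of elements. -/
noncomputable def wt (w : α → ℝ) (S : Set α) : ℝ := ∑ᶠ e ∈ S, w e

/-- The maximum weight of an independent set of `M`. -/
noncomputable def opt (M : Matroid α) (w : α → ℝ) : ℝ :=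
  sSup {t | ∃ I, M.Indep I ∧ wt w I = t}

/-! Shrinking `X_ℓ` can only lower `r(X_ℓ)`, and every element moved to the other side lies in
`cl(X_u) ⊆ cl(E - X_ℓ)`, so `r(E - X_ℓ)` does not grow either. -/

lemma cast_rk_eq_eRk (M : Matroid α) [M.RankFinite] (X : Set α) : (rk M X : ℕ∞) = M.eRk X := by
  obtain ⟨I, hI⟩ := M.exists_isBasis' X
  have hIfin : I.Finite := hI.indep.finite
  have hmax : IsGreatest {n | ∃ J, M.Indep J ∧ J ⊆ X ∧ J.ncard = n} I.ncard := by
    refine ⟨⟨I, hI.indep, hI.subset, rfl⟩, ?_⟩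
    rintro _ ⟨J, hJ, hJX, rfl⟩
    have hJI : J.encard ≤ I.encard := hI.encard_eq_eRk ▸ hJ.encard_le_eRk_of_subset hJX
    rwa [← hJ.finite.cast_ncard_eq, ← hIfin.cast_ncard_eq, Nat.cast_le] at hJI
  rw [rk, hmax.csSup_eq, hIfin.cast_ncard_eq, hI.encard_eq_eRk]

section

variable {M : Matroid α} [M.RankFinite] {X Y : Set α}

lemma rk_mono (h : X ⊆ Y) : rk M X ≤ rk M Y := by
  rw [← Nat.cast_le (α := ℕ∞), cast_rk_eq_eRk, cast_rk_eq_eRk]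
  exact M.eRk_mono h

lemma rk_le_rk_of_subset_closure (h : X ⊆ M.closure Y) : rk M X ≤ rk M Y := by
  rw [← Nat.cast_le (α := ℕ∞), cast_rk_eq_eRk, cast_rk_eq_eRk, ← M.eRk_closure_eq Y]
  exact M.eRk_mono h

lemma lambda_le_lambda_of_subset (hYX : Y ⊆ X) (hcompl : M.E \ Y ⊆ M.closure (M.E \ X)) :
    lambda M Y ≤ lambda M X := by
  have hY := rk_mono (M := M) hYX
  have hcY := rk_le_rk_of_subset_closure hcompl
  simp only [lambda]
  omega

end

lemma closure_subset_closure_diff_of_disjoint (M : Matroid α) {X Y : Set α} (h : Disjoint X Y) :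
    M.closure Y ⊆ M.closure (M.E \ X) := by
  rw [← M.closure_inter_ground Y]
  exact M.closure_subset_closure fun y ⟨hyY, hyE⟩ ↦ ⟨hyE, h.notMem_of_mem_right hyY⟩

theorem lambda_diff_closure_le_general (M : Matroid α) [M.Finite] (Xl Xu : Set α)
    (hdj : Disjoint Xl Xu) :
    lambda M (Xl \ M.closure Xu) ≤ lambda M Xl := by
  refine lambda_le_lambda_of_subset sdiff_subset fun x ⟨hxE, hx⟩ ↦ ?_
  by_cases hxl : x ∈ Xl
  · have hxcl : x ∈ M.closure Xu := not_not.mp fun h ↦ hx ⟨hxl, h⟩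
    exact closure_subset_closure_diff_of_disjoint M hdj hxcl
  · exact M.subset_closure _ sdiff_subset ⟨hxE, hxl⟩

/-- moving the elements of `X_ℓ ∩ cl_M(X_u)` out of a leaf part does not
increase the connectivity: `λ_M(X_ℓ \ cl_M(X_u)) ≤ λ_M(X_ℓ)`. -/
theorem lambda_diff_closure_le (M : Matroid α) [M.Finite] (Xl Xu : Set α)
    (hXl : Xl ⊆ M.E) (hXu : Xu ⊆ M.E) (hdj : Disjoint Xl Xu) :
    lambda M (Xl \ M.closure Xu) ≤ lambda M Xl :=
  lambda_diff_closure_le_general M Xl Xu hdj
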